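/- arXiv:2203.12956 — 2 statements merged into one kernel-verified Lean document; each statement's English description precedes it below -/
import Mathlib

section
/- Identify ℝ² with ℝ²×{0} ⊂ ℝ³. Let ε ≤ 1/20 and let g assign to each point q ∈ ℝ³ a symmetric bilinear form g_q on ℝ³ such that ‖g_q − ⟨·,·⟩‖ ≤ ε for every q (in the operator norm on bounded bilinear forms, ⟨·,·⟩ being the euclidean inner product) and ‖g_q − g_{q'}‖ ≤ ε‖q − q'‖ for all q, q'. Then for every point p in the cylinder Z_{3/2} = {(x,z) : x ∈ ℝ², |x| ≤ 3/2, |z| ≤ 3/2} there exists a unique x in the closed disc of radius 2 in ℝ² such that g_{(x,0)}(p − (x,0), v) = 0 for every v ∈ ℝ²×{0}. -/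
open scoped RealInnerProductSpace

/-- Abbreviation for `ℝ³`, with `ℝ²` identified with `ℝ² × {0} = {q : q³ = 0}`. -/
noncomputable abbrev E3 := EuclideanSpace ℝ (Fin 3)

/-- The euclidean inner product of `ℝ³` as a continuous bilinear form. -/
noncomputable def euclInner : E3 →L[ℝ] E3 →L[ℝ] ℝ :=
  LinearMap.mkContinuous₂
    (LinearMap.mk₂ ℝ (fun u v => ⟪u, v⟫)
      (fun u u' v => inner_add_left u u' v)
      (fun c u v => by show ⟪c • u, v⟫ = c • ⟪u, v⟫; rw [real_inner_smul_left, smul_eq_mul])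
      (fun u v v' => inner_add_right u v v')
      (fun c u v => by show ⟪u, c • v⟫ = c • ⟪u, v⟫; rw [real_inner_smul_right, smul_eq_mul]))
    1
    (fun u v => by
      simpa [Real.norm_eq_abs, one_mul] using abs_real_inner_le_norm u v)

/-!
Write `g_q = ⟪·,·⟫ + B_q`. For `x` in the plane `K`, the orthogonality condition says that `x` is a
fixed point of `Φ x = P_K p + (B_x (p - x, ·)|_K)^♯`, where `♯` is the Riesz isomorphism of `K`.
Since `B` is `ε`-small and `ε`-Lipschitz, `Φ` maps the disc of radius `2` into itself
(`‖P_K p‖ ≤ 3/2`, `‖p‖ ≤ 3/√2`) and is Lipschitz there with constant `ε (1 + ‖p‖ + 2) < 1`,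
so the Banach fixed point theorem gives existence and uniqueness.
-/

open scoped NNReal
open Set Function InnerProductSpace

theorem existsUnique_isFixedPt_of_lipschitzOnWith {α : Type*} [MetricSpace α] {f : α → α}
    {s : Set α} {c : ℝ≥0} (hsc : IsComplete s) (hs : s.Nonempty) (hsf : MapsTo f s s)
    (hc : c < 1) (hf : LipschitzOnWith c f s) :
    ∃! x, x ∈ s ∧ IsFixedPt f x := by
  have hcw : ContractingWith c (hsf.restrict f s s) := ⟨hc, hf.mapsToRestrict hsf⟩
  obtain ⟨x₀, hx₀⟩ := hs
  obtain ⟨x, hxs, hx, -⟩ := hcw.exists_fixedPoint' hsc hsf hx₀ (edist_ne_top _ _)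
  refine ⟨x, ⟨hxs, hx⟩, fun y ⟨hys, hy⟩ => ?_⟩
  exact congrArg Subtype.val
    (hcw.fixedPoint_unique' (x := ⟨y, hys⟩) (y := ⟨x, hxs⟩) (Subtype.ext hy) (Subtype.ext hx))

theorem Submodule.norm_comp_subtypeL_le {E : Type*} [SeminormedAddCommGroup E] [NormedSpace ℝ E]
    (K : Submodule ℝ E) (f : StrongDual ℝ E) : ‖f.comp K.subtypeL‖ ≤ ‖f‖ :=
  (f.opNorm_comp_le _).trans (mul_le_of_le_one_right (norm_nonneg f) K.norm_subtypeL_le)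

theorem norm_apply_sub_apply_sub_le {E F : Type*} [SeminormedAddCommGroup E] [NormedSpace ℝ E]
    [SeminormedAddCommGroup F] [NormedSpace ℝ F] (B : E → E →L[ℝ] F) (p x y : E) :
    ‖B x (p - x) - B y (p - y)‖ ≤ ‖B x‖ * ‖x - y‖ + ‖B x - B y‖ * ‖p - y‖ := by
  have hsplit : B x (p - x) - B y (p - y) = B x (y - x) + (B x - B y) (p - y) := by
    simp only [map_sub, sub_apply]
    abel
  calc ‖B x (p - x) - B y (p - y)‖ ≤ ‖B x (y - x)‖ + ‖(B x - B y) (p - y)‖ :=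
        hsplit ▸ norm_add_le _ _
    _ ≤ ‖B x‖ * ‖y - x‖ + ‖B x - B y‖ * ‖p - y‖ :=
        add_le_add ((B x).le_opNorm _) ((B x - B y).le_opNorm _)
    _ = ‖B x‖ * ‖x - y‖ + ‖B x - B y‖ * ‖p - y‖ := by rw [norm_sub_rev]

section PerturbedProjection

variable {E : Type*} [NormedAddCommGroup E] [InnerProductSpace ℝ E] (K : Submodule ℝ E)
  [CompleteSpace K] (B : E → E →L[ℝ] E →L[ℝ] ℝ) (p : E)

-- The paper's `Φ(q) = p⃗ - (δ - g_q)(p - q, e_i) e_i` with `B q = g_q - δ`: the sum over an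
-- orthonormal basis `e_i` of `K` is the Riesz representative of `(g_q - δ)(p - q, ·)` on `K`.
noncomputable def projectionMap (x : K) : K :=
  K.orthogonalProjectionOnto p + (toDual ℝ K).symm ((B x (p - x)).comp K.subtypeL)

theorem inner_projectionMap (x v : K) :
    ⟪projectionMap K B p x, v⟫ = ⟪(x : E), v⟫ + (⟪p - x, v⟫ + B x (p - x) v) := by
  simp only [projectionMap, inner_add_left,
    Submodule.inner_orthogonalProjectionOnto_eq_of_mem_right, toDual_symm_apply, ContinuousLinearMap.comp_apply, Submodule.subtypeL_apply, inner_sub_left]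
  ring

theorem isFixedPt_projectionMap_iff (x : K) :
    IsFixedPt (projectionMap K B p) x ↔ ∀ v ∈ K, ⟪p - x, v⟫ + B x (p - x) v = 0 := by
  constructor
  · intro hx v hv
    have h := inner_projectionMap K B p x ⟨v, hv⟩
    rw [hx.eq] at h
    exact left_eq_add.mp h
  · intro h
    exact ext_inner_right ℝ fun v => by rw [inner_projectionMap, h v v.2, add_zero]; rfl

theorem norm_projectionMap_le (x : K) :
    ‖projectionMap K B p x‖ ≤ ‖K.orthogonalProjectionOnto p‖ + ‖B x‖ * ‖p - x‖ := by
  refine (norm_add_le _ _).trans ?_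
  rw [LinearIsometryEquiv.norm_map]
  gcongr
  exact (K.norm_comp_subtypeL_le _).trans (ContinuousLinearMap.le_opNorm _ _)

theorem dist_projectionMap_le (x y : K) :
    dist (projectionMap K B p x) (projectionMap K B p y) ≤
      ‖B x‖ * dist x y + ‖B x - B y‖ * ‖p - y‖ := by
  rw [dist_eq_norm, projectionMap, projectionMap, add_sub_add_left_eq_sub, ← map_sub,
    LinearIsometryEquiv.norm_map, ← ContinuousLinearMap.sub_comp, dist_eq_norm, Submodule.coe_norm,
    Submodule.coe_sub]
  exact (K.norm_comp_subtypeL_le _).trans (norm_apply_sub_apply_sub_le B p x y)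

theorem existsUnique_perturbed_orthogonal {ε r : ℝ} (hr0 : 0 ≤ r) (hB : ∀ q, ‖B q‖ ≤ ε)
    (hBlip : ∀ q q', ‖B q - B q'‖ ≤ ε * ‖q - q'‖)
    (hr : ‖K.orthogonalProjectionOnto p‖ + ε * (‖p‖ + r) ≤ r) (hε : ε * (1 + ‖p‖ + r) < 1) :
    ∃! x : E, x ∈ K ∧ ‖x‖ ≤ r ∧ ∀ v ∈ K, ⟪p - x, v⟫ + B x (p - x) v = 0 := by
  have hε0 : 0 ≤ ε := (norm_nonneg (B 0)).trans (hB 0)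
  have hpx : ∀ x ∈ Metric.closedBall (0 : K) r, ‖p - x‖ ≤ ‖p‖ + r := fun x hx =>
    (norm_sub_le _ _).trans (add_le_add_right (mem_closedBall_zero_iff.mp hx) _)
  have hmaps : MapsTo (projectionMap K B p) (Metric.closedBall 0 r) (Metric.closedBall 0 r) := by
    intro x hx
    rw [mem_closedBall_zero_iff]
    calc ‖projectionMap K B p x‖ ≤ ‖K.orthogonalProjectionOnto p‖ + ‖B x‖ * ‖p - x‖ :=
          norm_projectionMap_le K B p x
      _ ≤ ‖K.orthogonalProjectionOnto p‖ + ε * (‖p‖ + r) := by gcongr; exacts [hB x, hpx x hx]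
      _ ≤ r := hr
  have hlip : LipschitzOnWith ⟨ε * (1 + ‖p‖ + r), by positivity⟩ (projectionMap K B p)
      (Metric.closedBall 0 r) := by
    refine LipschitzOnWith.of_dist_le_mul fun x hx y hy => ?_
    calc dist (projectionMap K B p x) (projectionMap K B p y)
        ≤ ‖B x‖ * dist x y + ‖B x - B y‖ * ‖p - y‖ := dist_projectionMap_le K B p x y
      _ ≤ ε * dist x y + ε * dist x y * (‖p‖ + r) := by
          gcongr
          · exact hB x
          · rw [dist_eq_norm, Submodule.coe_norm, Submodule.coe_sub]
            exact hBlip x y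
          · exact hpx y hy
      _ = ε * (1 + ‖p‖ + r) * dist x y := by ring
  obtain ⟨x, ⟨hxr, hx⟩, huniq⟩ := existsUnique_isFixedPt_of_lipschitzOnWith
    (Metric.isClosed_closedBall.isComplete) ⟨0, Metric.mem_closedBall_self hr0⟩ hmaps
    (show (⟨_, _⟩ : ℝ≥0) < 1 from hε) hlip
  refine ⟨x, ⟨x.2, mem_closedBall_zero_iff.mp hxr, (isFixedPt_projectionMap_iff K B p x).mp hx⟩,
    fun y ⟨hyK, hyr, hy⟩ => congrArg Subtype.val (huniq ⟨y, hyK⟩ ⟨?_, ?_⟩)⟩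
  · exact mem_closedBall_zero_iff.mpr hyr
  · exact (isFixedPt_projectionMap_iff K B p _).mpr hy

end PerturbedProjection

noncomputable def horizontalPlane : Submodule ℝ E3 :=
  (EuclideanSpace.proj (2 : Fin 3) : E3 →L[ℝ] ℝ).ker

theorem mem_horizontalPlane {x : E3} : x ∈ horizontalPlane ↔ x 2 = 0 := Iff.rfl

theorem E3.norm_sq_eq (x : E3) : ‖x‖ ^ 2 = x 0 ^ 2 + x 1 ^ 2 + x 2 ^ 2 := by
  simp [EuclideanSpace.norm_sq_eq, Fin.sum_univ_three]

theorem starProjection_horizontalPlane (p : E3) :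
    horizontalPlane.starProjection p = p - p 2 • EuclideanSpace.single 2 1 := by
  refine Submodule.eq_starProjection_of_mem_orthogonal (mem_horizontalPlane.mpr (by simp)) ?_
  rw [sub_sub_cancel, Submodule.mem_orthogonal]
  intro u hu
  simp [inner_smul_right, EuclideanSpace.inner_single_right, mem_horizontalPlane.mp hu]

theorem norm_sq_orthogonalProjectionOnto_horizontalPlane (p : E3) :
    ‖horizontalPlane.orthogonalProjectionOnto p‖ ^ 2 = p 0 ^ 2 + p 1 ^ 2 := by
  rw [Submodule.coe_norm, ← Submodule.starProjection_apply, starProjection_horizontalPlane,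
    E3.norm_sq_eq]
  simp

theorem euclInner_apply (u v : E3) : euclInner u v = ⟪u, v⟫ := rfl

theorem riemannian_projection_exists_unique_general
    (ε : ℝ) (hε : ε ≤ 1 / 20)
    (g : E3 → (E3 →L[ℝ] E3 →L[ℝ] ℝ))
    (hclose : ∀ q, ‖g q - euclInner‖ ≤ ε)
    (hlip : ∀ q q', ‖g q - g q'‖ ≤ ε * ‖q - q'‖)
    (p : E3) (hp1 : (p 0) ^ 2 + (p 1) ^ 2 ≤ (3 / 2) ^ 2) (hp2 : |p 2| ≤ 3 / 2) :
    ∃! x : E3, x 2 = 0 ∧ ‖x‖ ≤ 2 ∧ ∀ v : E3, v 2 = 0 → g x (p - x) v = 0 := by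
  have hε0 : 0 ≤ ε := (norm_nonneg (g 0 - euclInner)).trans (hclose 0)
  have hPp : ‖horizontalPlane.orthogonalProjectionOnto p‖ ≤ 3 / 2 := by
    refine (sq_le_sq₀ (norm_nonneg _) (by norm_num)).mp ?_
    rwa [norm_sq_orthogonalProjectionOnto_horizontalPlane]
  have hp : ‖p‖ ≤ 213 / 100 := by
    refine (sq_le_sq₀ (norm_nonneg _) (by norm_num)).mp ?_
    have : p 2 ^ 2 ≤ (3 / 2) ^ 2 := sq_le_sq' (abs_le.mp hp2).1 (abs_le.mp hp2).2
    rw [E3.norm_sq_eq]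
    linarith
  have hBlip : ∀ q q', ‖(g q - euclInner) - (g q' - euclInner)‖ ≤ ε * ‖q - q'‖ :=
    fun q q' => (sub_sub_sub_cancel_right (g q) (g q') euclInner).symm ▸ hlip q q'
  have hproj := existsUnique_perturbed_orthogonal horizontalPlane (fun q => g q - euclInner) p
    zero_le_two hclose hBlip (by nlinarith) (by nlinarith)
  simpa only [mem_horizontalPlane, sub_apply, euclInner_apply, add_sub_cancel] using hproj

/-- Riemannian projection onto the plane: if `g` assigns to each point of `ℝ³` a symmetric
bilinear form that is `ε`-close (`ε ≤ 1/20`) to the euclidean inner product in operator norm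
and `ε`-Lipschitz in the base point, then for every `p` in the cylinder
`Z_{3/2} = {(x,z) : |x| ≤ 3/2, |z| ≤ 3/2}` there is a unique point `x` of the plane
`ℝ² × {0}` with `‖x‖ ≤ 2` such that `p − x` is `g_x`-orthogonal to the plane. -/
theorem riemannian_projection_exists_unique
    (ε : ℝ) (hε : ε ≤ 1 / 20)
    (g : E3 → (E3 →L[ℝ] E3 →L[ℝ] ℝ))
    (hsym : ∀ q u v, g q u v = g q v u)
    (hclose : ∀ q, ‖g q - euclInner‖ ≤ ε)
    (hlip : ∀ q q', ‖g q - g q'‖ ≤ ε * ‖q - q'‖)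
    (p : E3) (hp1 : (p 0) ^ 2 + (p 1) ^ 2 ≤ (3 / 2) ^ 2) (hp2 : |p 2| ≤ 3 / 2) :
    ∃! x : E3, x 2 = 0 ∧ ‖x‖ ≤ 2 ∧ ∀ v : E3, v 2 = 0 → g x (p - x) v = 0 :=
  riemannian_projection_exists_unique_general ε hε g hclose hlip p hp1 hp2
end

section
/- Let E and F be real normed spaces, V ⊆ E a convex set, θ ∈ (0,1], and M₁, M₂, M₃ ≥ 0. Let g : ℝ × E → F be such that for each t the map v ↦ g(t,v) is continuously differentiable on a neighborhood of V with partial derivative D₂g satisfying: ‖D₂g(t,v)‖ ≤ M₁ for all t ∈ ℝ, v ∈ V; ‖D₂g(t,u) − D₂g(t,v)‖ ≤ M₂‖u − v‖ for all t ∈ ℝ and u,v ∈ V; and ‖D₂g(t,v) − D₂g(s,v)‖ ≤ M₃|t−s|^θ for all s,t ∈ ℝ, v ∈ V. Then for all s,t ∈ ℝ and all a, a', b, b' ∈ V, ‖g(t,a) − g(t,a') − g(s,b) + g(s,b')‖ ≤ M₁‖(a − a') − (b − b')‖ + M₂(‖a − b‖ + ‖a' − b'‖)‖b − b'‖ + M₃|t−s|^θ‖b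 − b'‖. -/
/-!
Apply the mean value inequality to `r ↦ g(t, A r) - g(s, B r)`, where `A`, `B` parametrise the
segments `[a', a]`, `[b', b]`. Its derivative `D t (A r) (a - a') - D s (B r) (b - b')` is split
through `D t (B r)` into three terms, controlled by the bound, the Lipschitz and the Hölder
hypotheses respectively.
-/

open AffineMap Set

theorem ContinuousLinearMap.norm_apply_sub_apply_le {𝕜 E F : Type*} [NontriviallyNormedField 𝕜]
    [SeminormedAddCommGroup E] [NormedSpace 𝕜 E] [SeminormedAddCommGroup F] [NormedSpace 𝕜 F]
    (L P Q : E →L[𝕜] F) (x y : E) :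
    ‖L x - Q y‖ ≤ ‖L‖ * ‖x - y‖ + ‖L - P‖ * ‖y‖ + ‖P - Q‖ * ‖y‖ := by
  have split : L x - Q y = L (x - y) + (L - P) y + (P - Q) y := by
    simp only [map_sub, sub_apply]
    abel
  rw [split]
  refine norm_add₃_le.trans ?_
  gcongr <;> exact le_opNorm _ _

section

variable {E F : Type*} [NormedAddCommGroup E] [NormedSpace ℝ E]
  [NormedAddCommGroup F] [NormedSpace ℝ F]

theorem norm_lineMap_le_max (x y : E) {r : ℝ} (hr : r ∈ Icc (0 : ℝ) 1) :
    ‖lineMap x y r‖ ≤ max ‖x‖ ‖y‖ :=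
  (convexOn_norm convex_univ).le_max_of_mem_segment trivial trivial
    (lineMap_mem_segment ℝ x y hr)

theorem norm_lineMap_sub_lineMap_le (a' a b' b : E) {r : ℝ} (hr : r ∈ Icc (0 : ℝ) 1) :
    ‖lineMap a' a r - lineMap b' b r‖ ≤ ‖a - b‖ + ‖a' - b'‖ := by
  rw [← vsub_eq_sub, lineMap_vsub_lineMap, vsub_eq_sub, vsub_eq_sub, add_comm]
  exact (norm_lineMap_le_max _ _ hr).trans (max_le_add_of_nonneg (norm_nonneg _) (norm_nonneg _))

theorem norm_sub_sub_sub_add_le_of_hasFDerivAt {f₁ f₂ : E → F} {f₁' f₂' : E → E →L[ℝ] F}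
    {a a' b b' : E} {C : ℝ}
    (hf₁ : ∀ x ∈ segment ℝ a' a, HasFDerivAt f₁ (f₁' x) x)
    (hf₂ : ∀ x ∈ segment ℝ b' b, HasFDerivAt f₂ (f₂' x) x)
    (bound : ∀ r ∈ Icc (0 : ℝ) 1,
      ‖f₁' (lineMap a' a r) (a - a') - f₂' (lineMap b' b r) (b - b')‖ ≤ C) :
    ‖f₁ a - f₁ a' - f₂ b + f₂ b'‖ ≤ C := by
  set h : ℝ → F := fun r => f₁ (lineMap a' a r) - f₂ (lineMap b' b r)
  have hderiv : ∀ r ∈ Icc (0 : ℝ) 1, HasDerivWithinAt h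
      (f₁' (lineMap a' a r) (a - a') - f₂' (lineMap b' b r) (b - b')) (Icc 0 1) r := by
    intro r hr
    have h₁ := (hf₁ _ (lineMap_mem_segment ℝ a' a hr)).comp_hasDerivAt r hasDerivAt_lineMap
    have h₂ := (hf₂ _ (lineMap_mem_segment ℝ b' b hr)).comp_hasDerivAt r hasDerivAt_lineMap
    exact (h₁.sub h₂).hasDerivWithinAt
  have hends : f₁ a - f₁ a' - f₂ b + f₂ b' = h 1 - h 0 := by
    simp only [h, lineMap_apply_one, lineMap_apply_zero]
    abel
  have mvt := (convex_Icc (0 : ℝ) 1).norm_image_sub_le_of_norm_hasDerivWithin_le hderiv bound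
    (left_mem_Icc.2 zero_le_one) (right_mem_Icc.2 zero_le_one)
  rwa [sub_zero, norm_one, mul_one, ← hends] at mvt

end

theorem four_point_estimate_general
    {E F : Type*} [NormedAddCommGroup E] [NormedSpace ℝ E]
    [NormedAddCommGroup F] [NormedSpace ℝ F]
    (V : Set E) (hV : Convex ℝ V)
    (θ : ℝ)
    (M₁ M₂ M₃ : ℝ) (hM₂ : 0 ≤ M₂)
    (g : ℝ × E → F) (D : ℝ → E → (E →L[ℝ] F))
    (U : Set E) (hVU : V ⊆ U)
    (hderiv : ∀ t : ℝ, ∀ v ∈ U, HasFDerivAt (fun w => g (t, w)) (D t v) v)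
    (hbound : ∀ t : ℝ, ∀ v ∈ V, ‖D t v‖ ≤ M₁)
    (hlip : ∀ t : ℝ, ∀ u ∈ V, ∀ v ∈ V, ‖D t u - D t v‖ ≤ M₂ * ‖u - v‖)
    (hhol : ∀ s t : ℝ, ∀ v ∈ V, ‖D t v - D s v‖ ≤ M₃ * |t - s| ^ θ)
    (s t : ℝ) (a a' b b' : E)
    (ha : a ∈ V) (ha' : a' ∈ V) (hb : b ∈ V) (hb' : b' ∈ V) :
    ‖g (t, a) - g (t, a') - g (s, b) + g (s, b')‖ ≤
      M₁ * ‖(a - a') - (b - b')‖ + M₂ * (‖a - b‖ + ‖a' - b'‖) * ‖b - b'‖ +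
        M₃ * |t - s| ^ θ * ‖b - b'‖ := by
  refine norm_sub_sub_sub_add_le_of_hasFDerivAt (f₁ := fun w => g (t, w))
    (f₂ := fun w => g (s, w)) (f₁' := D t) (f₂' := D s)
    (fun x hx => hderiv t x (hVU (hV.segment_subset ha' ha hx)))
    (fun x hx => hderiv s x (hVU (hV.segment_subset hb' hb hx))) fun r hr => ?_
  set A := lineMap a' a r
  set B := lineMap b' b r
  have hA : A ∈ V := hV.segment_subset ha' ha (lineMap_mem_segment ℝ a' a hr)
  have hB : B ∈ V := hV.segment_subset hb' hb (lineMap_mem_segment ℝ b' b hr)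
  calc _ ≤ ‖D t A‖ * ‖(a - a') - (b - b')‖ + ‖D t A - D t B‖ * ‖b - b'‖ +
        ‖D t B - D s B‖ * ‖b - b'‖ := (D t A).norm_apply_sub_apply_le (D t B) (D s B) _ _
    _ ≤ _ := by
      gcongr
      · exact hbound t A hA
      · exact (hlip t A hA B hB).trans
          (mul_le_mul_of_nonneg_left (norm_lineMap_sub_lineMap_le a' a b' b hr) hM₂)
      · exact hhol s t B hB

/-- The four-point estimate for parameter-dependent maps: if `v ↦ g(t,v)` is `C¹` on a
neighborhood of a convex set `V` with partial derivative `D₂g` bounded by `M₁`,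
`M₂`-Lipschitz in the space variable, and `M₃`-Hölder (exponent `θ`) in time on `V`, then
for `a, a', b, b' ∈ V`,
`‖g(t,a) − g(t,a') − g(s,b) + g(s,b')‖
  ≤ M₁‖(a−a')−(b−b')‖ + M₂(‖a−b‖+‖a'−b'‖)‖b−b'‖ + M₃|t−s|^θ‖b−b'‖`. -/
theorem four_point_estimate
    {E F : Type*} [NormedAddCommGroup E] [NormedSpace ℝ E]
    [NormedAddCommGroup F] [NormedSpace ℝ F]
    (V : Set E) (hV : Convex ℝ V)
    (θ : ℝ) (hθ : θ ∈ Set.Ioc (0 : ℝ) 1)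
    (M₁ M₂ M₃ : ℝ) (hM₁ : 0 ≤ M₁) (hM₂ : 0 ≤ M₂) (hM₃ : 0 ≤ M₃)
    (g : ℝ × E → F) (D : ℝ → E → (E →L[ℝ] F))
    (U : Set E) (hU : IsOpen U) (hVU : V ⊆ U)
    (hderiv : ∀ t : ℝ, ∀ v ∈ U, HasFDerivAt (fun w => g (t, w)) (D t v) v)
    (hcont : ∀ t : ℝ, ContinuousOn (D t) U)
    (hbound : ∀ t : ℝ, ∀ v ∈ V, ‖D t v‖ ≤ M₁)
    (hlip : ∀ t : ℝ, ∀ u ∈ V, ∀ v ∈ V, ‖D t u - D t v‖ ≤ M₂ * ‖u - v‖)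
    (hhol : ∀ s t : ℝ, ∀ v ∈ V, ‖D t v - D s v‖ ≤ M₃ * |t - s| ^ θ)
    (s t : ℝ) (a a' b b' : E)
    (ha : a ∈ V) (ha' : a' ∈ V) (hb : b ∈ V) (hb' : b' ∈ V) :
    ‖g (t, a) - g (t, a') - g (s, b) + g (s, b')‖ ≤
      M₁ * ‖(a - a') - (b - b')‖ + M₂ * (‖a - b‖ + ‖a' - b'‖) * ‖b - b'‖ +
        M₃ * |t - s| ^ θ * ‖b - b'‖ :=
  four_point_estimate_general V hV θ M₁ M₂ M₃ hM₂ g D U hVU hderiv hbound hlip hhol s t a a' b b' ha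
    ha' hb hb'
end
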